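/- arXiv:1609.05411 — 3 statements merged into one kernel-verified Lean document; each statement's English description precedes it below -/
import Mathlib

section
/- If there is a fine, countably complete ultrafilter on the countable subsets of ω₁, then there exists a countably complete nonprincipal ultrafilter on ω₁ (i.e., ω₁ is a measurable cardinal in the choiceless sense). -/
/-- The collection of countable subsets of `X` (the set `𝒫_{ω₁}(X)`). -/
abbrev CSub (X : Type*) := {σ : Set X // σ.Countable}

/-- An ultrafilter on `𝒫_{ω₁}(X)` is *fine* if it contains `{σ : x ∈ σ}` for every `x ∈ X`. -/
def IsFine {X : Type*} (μ : Ultrafilter (CSub X)) : Prop :=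
  ∀ x : X, {σ : CSub X | x ∈ σ.1} ∈ μ

/-- An ultrafilter is *countably complete* if it is closed under countable intersections. -/
def IsCountablyComplete {α : Type*} (μ : Ultrafilter α) : Prop :=
  ∀ A : ℕ → Set α, (∀ n, A n ∈ μ) → (⋂ n, A n) ∈ μ

/-- `ω₁`, realized as the type of ordinals below `(aleph 1).ord`. -/
abbrev Omega1 := {o : Ordinal // o < (Cardinal.aleph 1).ord}

/-!
Push `μ` forward along `σ ↦ sup σ`. Countable completeness survives any pushforward, and
fineness makes the image nonprincipal: for `α < β` the set `{σ | β ∈ σ}` lies in `μ` and every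
such `σ` has `sup σ ≥ β > α`. The `ω₁` of the conclusion may live in another universe than the
one of `μ`, so the ultrafilter is finally transported along a bijection between the two.
-/

open Cardinal Filter

universe u v

theorem IsCountablyComplete.map {α β : Type*} {μ : Ultrafilter α} (hμ : IsCountablyComplete μ)
    (f : α → β) : IsCountablyComplete (μ.map f) := fun A hA => by
  simpa only [Ultrafilter.mem_map, Set.preimage_iInter] using hμ _ hA

theorem Omega1.exists_gt (α : Omega1) : ∃ β : Omega1, α < β :=
  ⟨⟨α.1 + 1, (isSuccLimit_ord (aleph0_le_aleph 1)).add_one_lt α.2⟩,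
    Subtype.coe_lt_coe.1 (Order.lt_add_one_iff.2 le_rfl)⟩

noncomputable def CSub.sup (σ : CSub Omega1) : Omega1 :=
  ⟨⨆ x : σ.1, x.1.1, by
    have := σ.2.to_subtype
    simpa only [ord_aleph] using Ordinal.iSup_lt_omega_one fun x : σ.1 => ord_aleph 1 ▸ x.1.2⟩

theorem CSub.le_sup {σ : CSub Omega1} {α : Omega1} (h : α ∈ σ.1) : α ≤ σ.sup :=
  have := σ.2.to_subtype
  Ordinal.le_iSup (fun x : σ.1 => x.1.1) ⟨α, h⟩

theorem IsFine.map_sup_le_cofinite {μ : Ultrafilter (CSub Omega1)} (hfine : IsFine μ) :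
    (μ.map CSub.sup : Filter Omega1) ≤ cofinite := by
  refine le_cofinite_iff_compl_singleton_mem.2 fun α => ?_
  obtain ⟨β, hαβ⟩ := α.exists_gt
  exact Ultrafilter.mem_map.2 <| mem_of_superset (hfine β) fun σ hβ =>
    (hαβ.trans_le (CSub.le_sup hβ)).ne'

theorem Omega1.nonempty_equiv : Nonempty (Omega1.{u} ≃ Omega1.{v}) := by
  rw [← lift_mk_eq']
  change lift #(Set.Iio (aleph 1).ord) = lift #(Set.Iio (aleph 1).ord)
  simp only [mk_Iio_ordinal, card_ord, lift_aleph, Ordinal.lift_one]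

/-- if there is a fine, countably complete ultrafilter on the countable
subsets of `ω₁`, then there is a countably complete nonprincipal ultrafilter on `ω₁`
(`ω₁` is measurable in the choiceless sense). -/
theorem stmt1 (μ : Ultrafilter (CSub Omega1))
    (hfine : IsFine μ) (hcc : IsCountablyComplete μ) :
    ∃ ν : Ultrafilter Omega1, IsCountablyComplete ν ∧ ∀ α : Omega1, ({α}ᶜ : Set Omega1) ∈ ν := by
  obtain ⟨e⟩ := Omega1.nonempty_equiv
  refine ⟨(μ.map CSub.sup).map e, (hcc.map _).map e, le_cofinite_iff_compl_singleton_mem.1 ?_⟩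
  exact e.injective.tendsto_cofinite.mono_left hfine.map_sup_le_cofinite
end

section
/- Let λ be a regular uncountable cardinal and let (C_α : α a limit ordinal < λ) be a coherent sequence of clubs. If D ⊆ λ is a thread for this sequence (a club such that C_α = D ∩ α for every limit point α of D) and every C_α has order type at most ω₁, then the order type of D is at most ω₁ + ω; in particular, if λ is regular and greater than ω₁ then no such thread with this property exists, so a square-like coherent sequence with clubs of order type ≤ ω₁ on a regular λ > ω₁ cannot be threaded by a club of order type less than λ. -/
/-- `β` is a limit point of the set of ordinals `C`: `β ≠ 0` and `C ∩ β` is unbounded in `β`. -/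
def IsLimitPt (C : Set Ordinal) (β : Ordinal) : Prop :=
  β ≠ 0 ∧ ∀ γ < β, ∃ δ ∈ C, γ < δ ∧ δ < β

/-- `C` is a club (closed unbounded) subset of the ordinal `α`. -/
def ClubIn (C : Set Ordinal) (α : Ordinal) : Prop :=
  (∀ β ∈ C, β < α) ∧ (∀ β < α, ∃ γ ∈ C, β ≤ γ) ∧
    (∀ β < α, IsLimitPt C β → β ∈ C)

/-- `(C α : α ∈ lim(lam))` is a coherent sequence of clubs: each `C α` is club in `α` and
`C α = C β ∩ α` whenever `α` is a limit point of `C β`. -/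
def Coherent (lam : Ordinal) (C : Ordinal → Set Ordinal) : Prop :=
  (∀ α < lam, Order.IsSuccLimit α → ClubIn (C α) α) ∧
    (∀ β < lam, Order.IsSuccLimit β → ∀ α, IsLimitPt (C β) α → C α = C β ∩ Set.Iio α)

/-- `D` is a thread for the coherent sequence `C` on `lam`: a club in `lam` with
`C α = D ∩ α` for every limit point `α < lam` of `D`. -/
def IsThread (lam : Ordinal) (C : Ordinal → Set Ordinal) (D : Set Ordinal) : Prop :=
  ClubIn D lam ∧ ∀ α < lam, IsLimitPt D α → C α = D ∩ Set.Iio α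

/-- `lam` is threadable (`¬ □(lam)`): every coherent sequence of length `lam` has a thread. -/
def Threadable (lam : Ordinal) : Prop :=
  ∀ C : Ordinal → Set Ordinal, Coherent lam C → ∃ D, IsThread lam C D

/-- The order type of a set of ordinals. -/
noncomputable def otype (S : Set Ordinal) : Ordinal :=
  Ordinal.type ((· < ·) : S → S → Prop)

/-!
If `D` had order type above `μ = ω₁ + ω`, the initial segment of `D` of order type `μ` would be
unbounded in its supremum `α`, because `μ` is a limit ordinal. Then `α < λ` is a limit point of
the thread `D`, so `C α = D ∩ α` is that initial segment, of order type `μ > ω₁`.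
-/

open Ordinal

lemma otype_inter_Iio (S : Set Ordinal) (a : ↥S) :
    otype (S ∩ Set.Iio (a : Ordinal)) = typein ((· < ·) : S → S → Prop) a := by
  rw [← type_subrel]
  exact type_eq.2 ⟨⟨⟨fun x => ⟨⟨x.val, x.2.1⟩, x.2.2⟩,
    fun y => ⟨y.val.val, y.val.2, y.2⟩, fun _ => rfl, fun _ => rfl⟩, Iff.rfl⟩⟩

lemma exists_otype_inter_Iio_eq {D : Set Ordinal} {μ : Ordinal} (h : μ < otype D) :
    ∃ d ∈ D, otype (D ∩ Set.Iio d) = μ := by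
  let r : D → D → Prop := (· < ·)
  have h' : μ < type r := h
  exact ⟨_, (enum r ⟨μ, h'⟩).2, by rw [otype_inter_Iio, typein_enum]⟩

lemma Set.Nonempty.of_otype_ne_zero {S : Set Ordinal} (h : otype S ≠ 0) : S.Nonempty :=
  Set.nonempty_coe_sort.1 (type_ne_zero_iff_nonempty.1 h)

lemma exists_gt_of_isSuccLimit_otype {S : Set Ordinal} (hS : Order.IsSuccLimit (otype S))
    {x : Ordinal} (hx : x ∈ S) : ∃ y ∈ S, x < y := by
  let r : S → S → Prop := (· < ·)
  have hsucc : Order.succ (typein r ⟨x, hx⟩) ∈ Set.Iio (type r) :=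
    hS.succ_lt (typein_lt_type r _)
  refine ⟨enum r ⟨_, hsucc⟩, (enum r ⟨_, hsucc⟩).2, ?_⟩
  change r ⟨x, hx⟩ (enum r ⟨_, hsucc⟩)
  rw [← typein_lt_typein r, typein_enum r hsucc]
  exact Order.lt_succ _

section NoMax

variable {S : Set Ordinal} (hbdd : BddAbove S) (hmax : ∀ x ∈ S, ∃ y ∈ S, x < y)
include hbdd hmax

lemma lt_csSup_of_forall_exists_gt {x : Ordinal} (hx : x ∈ S) : x < sSup S := by
  obtain ⟨y, hy, hxy⟩ := hmax x hx
  exact hxy.trans_le (le_csSup hbdd hy)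

lemma isLimitPt_csSup_of_forall_exists_gt (hne : S.Nonempty) : IsLimitPt S (sSup S) := by
  refine ⟨?_, fun γ hγ => ?_⟩
  · obtain ⟨x, hx⟩ := hne
    exact (lt_csSup_of_forall_exists_gt hbdd hmax hx).ne_bot
  · obtain ⟨δ, hδ, hγδ⟩ := exists_lt_of_lt_csSup hne hγ
    exact ⟨δ, hδ, hγδ, lt_csSup_of_forall_exists_gt hbdd hmax hδ⟩

end NoMax

lemma IsLimitPt.mono {S T : Set Ordinal} {α : Ordinal} (h : IsLimitPt S α) (hST : S ⊆ T) :
    IsLimitPt T α :=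
  ⟨h.1, fun γ hγ => (h.2 γ hγ).imp fun _ ⟨hδ, hlt⟩ => ⟨hST hδ, hlt⟩⟩

lemma IsLimitPt.isSuccLimit {S : Set Ordinal} {α : Ordinal} (h : IsLimitPt S α) :
    Order.IsSuccLimit α := by
  rw [isSuccLimit_iff]
  refine ⟨h.1, Order.isSuccPrelimit_of_succ_lt fun a ha => ?_⟩
  obtain ⟨δ, -, haδ, hδα⟩ := h.2 a ha
  exact (Order.succ_le_of_lt haδ).trans_lt hδα

lemma exists_isLimitPt_otype_inter_Iio_eq {D : Set Ordinal} {μ : Ordinal}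
    (hμ : Order.IsSuccLimit μ) (h : μ < otype D) :
    ∃ α, IsLimitPt D α ∧ (∃ d ∈ D, α ≤ d) ∧ otype (D ∩ Set.Iio α) = μ := by
  obtain ⟨d, hd, hdμ⟩ := exists_otype_inter_Iio_eq h
  set S := D ∩ Set.Iio d
  have hbdd : BddAbove S := ⟨d, fun _ hx => hx.2.le⟩
  have hmax : ∀ x ∈ S, ∃ y ∈ S, x < y := fun _ =>
    exists_gt_of_isSuccLimit_otype (hdμ ▸ hμ)
  have hne : S.Nonempty := .of_otype_ne_zero (hdμ ▸ hμ.ne_bot)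
  have hαd : sSup S ≤ d := csSup_le hne fun _ hx => hx.2.le
  have hSα : D ∩ Set.Iio (sSup S) = S := by
    ext x
    exact ⟨fun hx => ⟨hx.1, hx.2.trans_le hαd⟩,
      fun hx => ⟨hx.1, lt_csSup_of_forall_exists_gt hbdd hmax hx⟩⟩
  refine ⟨sSup S, ?_, ⟨d, hd, hαd⟩, (congrArg otype hSα).trans hdμ⟩
  exact (isLimitPt_csSup_of_forall_exists_gt hbdd hmax hne).mono Set.inter_subset_left

theorem stmt2_general (c : Cardinal)
    (C : Ordinal → Set Ordinal)
    (hot : ∀ α < c.ord, Order.IsSuccLimit α → otype (C α) ≤ (Cardinal.aleph 1).ord)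
    (D : Set Ordinal) (hD : IsThread c.ord C D) :
    otype D ≤ (Cardinal.aleph 1).ord + Ordinal.omega0 := by
  by_contra! h
  obtain ⟨α, hαD, ⟨d, hd, hαd⟩, hotα⟩ :=
    exists_isLimitPt_otype_inter_Iio_eq (isSuccLimit_add _ isSuccLimit_omega0) h
  have hαlam : α < c.ord := hαd.trans_lt (hD.1.1 d hd)
  have hle := hot α hαlam hαD.isSuccLimit
  rw [hD.2 α hαlam hαD, hotα] at hle
  exact hle.not_gt (lt_add_of_pos_right _ omega0_pos)

/-- if `D` threads a coherent sequence on a regular uncountable `λ` all of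
whose clubs have order type at most `ω₁`, then `D` has order type at most `ω₁ + ω`. -/
theorem stmt2 (c : Cardinal) (hreg : c.IsRegular) (hunc : Cardinal.aleph0 < c)
    (C : Ordinal → Set Ordinal) (hcoh : Coherent c.ord C)
    (hot : ∀ α < c.ord, Order.IsSuccLimit α → otype (C α) ≤ (Cardinal.aleph 1).ord)
    (D : Set Ordinal) (hD : IsThread c.ord C D) :
    otype D ≤ (Cardinal.aleph 1).ord + Ordinal.omega0 :=
  stmt2_general c C hot D hD
end

section
/- Assume ZF. Let ν be a countably complete nonprincipal ultrafilter on ω₁, let (Γ_α : α < ω₁) be an increasing family of sets with union Γ, and for each α < ω₁ let μ_α be a fine countably complete ultrafilter on the countable subsets of Γ_α. Define μ* on subsets A of 𝒫_{ω₁}(Γ) by: A ∈ μ* iff for ν-almost every α, {σ ∈ A : σ ⊆ Γ_α} ∈ μ_α. Then μ* is a fine, countably complete ultrafilter on 𝒫_{ω₁}(Γ). -/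
/-! `μ*` is the ultrafilter limit `ν.bind μ` of the `μ_α`: since `μ_α` concentrates on
`{σ | σ ⊆ Γ_α}`, cutting `A` down to that set does not change its `μ_α`-measure. Countable
completeness passes through the limit, and fineness follows because a countably complete
nonprincipal `ν` contains every tail `[α, ω₁)`, its complement being countable. -/

open Set Filter

theorem IsCountablyComplete.countableInterFilter {α : Type*} {μ : Ultrafilter α}
    (h : IsCountablyComplete μ) : CountableInterFilter (μ : Filter α) := by
  refine ⟨fun S hS hSμ => ?_⟩
  rcases S.eq_empty_or_nonempty with rfl | hne
  · simp
  · obtain ⟨A, rfl⟩ := hS.exists_eq_range hne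
    rw [sInter_range]
    exact h A fun n => hSμ _ (mem_range_self n)

theorem Filter.compl_mem_of_countable {α : Type*} {l : Filter α} [CountableInterFilter l]
    (h : ∀ a, ({a}ᶜ : Set α) ∈ l) {s : Set α} (hs : s.Countable) : sᶜ ∈ l := by
  rw [← biUnion_of_singleton s, compl_iUnion₂]
  exact (countable_bInter_mem hs).2 fun a _ => h a

theorem Omega1.countable_Iio (α : Omega1) : (Iio α).Countable := by
  have hIio : (Iio α.1).Countable := by
    rw [← Cardinal.le_aleph0_iff_set_countable, Cardinal.mk_Iio_ordinal, Cardinal.lift_le_aleph0,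
      ← Cardinal.lt_aleph_one_iff]
    exact Cardinal.lt_ord.mp α.2
  exact hIio.preimage Subtype.val_injective

theorem Omega1.Ici_mem {ν : Ultrafilter Omega1} (hνcc : IsCountablyComplete ν)
    (hνnp : ∀ α : Omega1, ({α}ᶜ : Set Omega1) ∈ ν) (α : Omega1) : Ici α ∈ ν := by
  have := hνcc.countableInterFilter
  simpa only [compl_Iio, Ultrafilter.mem_coe] using compl_mem_of_countable hνnp (countable_Iio α)

theorem Ultrafilter.mem_bind_iff {α β : Type*} {ν : Ultrafilter α} {μ : α → Ultrafilter β}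
    {s : Set β} : s ∈ ν.bind μ ↔ {a | s ∈ μ a} ∈ ν :=
  Iff.rfl

theorem IsCountablyComplete.bind {α β : Type*} {ν : Ultrafilter α} {μ : α → Ultrafilter β}
    (hν : IsCountablyComplete ν) (hμ : ∀ a, IsCountablyComplete (μ a)) :
    IsCountablyComplete (ν.bind μ) := fun A hA =>
  Ultrafilter.mem_bind_iff.2 <|
    mem_of_superset (hν (fun n => {a | A n ∈ μ a}) hA) fun a ha => hμ a A (mem_iInter.mp ha)

theorem stmt6_general {Γ : Type*}
    (ν : Ultrafilter Omega1) (hνcc : IsCountablyComplete ν)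
    (hνnp : ∀ α : Omega1, ({α}ᶜ : Set Omega1) ∈ ν)
    (G : Omega1 → Set Γ)
    (hmono : ∀ α β : Omega1, α ≤ β → G α ⊆ G β)
    (hunion : ∀ x : Γ, ∃ α, x ∈ G α)
    (μ : Omega1 → Ultrafilter (CSub Γ))
    (hconc : ∀ α, {σ : CSub Γ | σ.1 ⊆ G α} ∈ μ α)
    (hfine : ∀ α, ∀ x ∈ G α, {σ : CSub Γ | x ∈ σ.1} ∈ μ α)
    (hcc : ∀ α, IsCountablyComplete (μ α)) :
    ∃ μs : Ultrafilter (CSub Γ),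
      (∀ A : Set (CSub Γ),
          A ∈ μs ↔ {α : Omega1 | {σ : CSub Γ | σ ∈ A ∧ σ.1 ⊆ G α} ∈ μ α} ∈ ν) ∧
        IsFine μs ∧ IsCountablyComplete μs := by
  refine ⟨ν.bind μ, fun A => ?_, fun x => ?_, hνcc.bind hcc⟩
  · have hcut : ∀ α, {σ : CSub Γ | σ ∈ A ∧ σ.1 ⊆ G α} ∈ μ α ↔ A ∈ μ α := fun α =>
      ⟨fun h => mem_of_superset h fun _ hσ => hσ.1, fun h => inter_mem h (hconc α)⟩
    simp only [Ultrafilter.mem_bind_iff, hcut]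
  · obtain ⟨α, hxα⟩ := hunion x
    exact Ultrafilter.mem_bind_iff.2 <| mem_of_superset (Omega1.Ici_mem hνcc hνnp α)
      fun β hαβ => hfine β x (hmono α β hαβ hxα)

/-- assembling fine, countably complete measures `μ_α` on `𝒫_{ω₁}(Γ_α)`
(for an increasing family `(Γ_α : α < ω₁)` with union `Γ`) along a countably complete
nonprincipal ultrafilter `ν` on `ω₁`: the filter
`A ∈ μ* iff for ν-almost every α, {σ ∈ A : σ ⊆ Γ_α} ∈ μ_α`
is a fine, countably complete ultrafilter on `𝒫_{ω₁}(Γ)`. -/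
theorem stmt6 {Γ : Type*}
    (ν : Ultrafilter Omega1) (hνcc : IsCountablyComplete ν)
    (hνnp : ∀ α : Omega1, ({α}ᶜ : Set Omega1) ∈ ν)
    (G : Omega1 → Set Γ)
    (hmono : ∀ α β : Omega1, α ≤ β → G α ⊆ G β)
    (hunion : ∀ x : Γ, ∃ α, x ∈ G α)
    (hcover : ∀ σ : Set Γ, σ.Countable → ∃ α, σ ⊆ G α)
    (μ : Omega1 → Ultrafilter (CSub Γ))
    (hconc : ∀ α, {σ : CSub Γ | σ.1 ⊆ G α} ∈ μ α)
    (hfine : ∀ α, ∀ x ∈ G α, {σ : CSub Γ | x ∈ σ.1} ∈ μ α)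
    (hcc : ∀ α, IsCountablyComplete (μ α)) :
    ∃ μs : Ultrafilter (CSub Γ),
      (∀ A : Set (CSub Γ),
          A ∈ μs ↔ {α : Omega1 | {σ : CSub Γ | σ ∈ A ∧ σ.1 ⊆ G α} ∈ μ α} ∈ ν) ∧
        IsFine μs ∧ IsCountablyComplete μs :=
  stmt6_general ν hνcc hνnp G hmono hunion μ hconc hfine hcc
end
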